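/- Let A ∈ ℝ^{N×N} be symmetric with eigenvalues λ1(A) ≥ λ2(A) ≥ … ordered decreasingly and λr(A) > 0, and let Ã = A + W with W symmetric. Let F ∈ ℝ^{N×r} (resp. F̃) have orthonormal columns consisting of eigenvectors of A (resp. Ã) corresponding to its r largest eigenvalues. Let H = FᵀF̃ have SVD AΣ̃Bᵀ and set G = ABᵀ. Define δ = λr(A) − λ_{r+1}(A). If ‖W‖₂ < δ, then ‖G − H‖_F ≤ ‖WF‖_F/(δ − ‖W‖₂). -/

import Mathlib

open Matrix MeasureTheory
open scoped Classical

noncomputable section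

/-- Euclidean norm of a finitely-indexed real vector. -/
def vecNorm {n : Type*} [Fintype n] (v : n → ℝ) : ℝ :=
  Real.sqrt (∑ j, (v j) ^ 2)

/-- Spectral norm (ℓ₂ operator norm) of a real matrix. -/
def specNorm {m n : Type*} [Fintype m] [Fintype n] (A : Matrix m n ℝ) : ℝ :=
  sSup {c : ℝ | ∃ x : n → ℝ, vecNorm x ≤ 1 ∧ c = vecNorm (A.mulVec x)}

/-- Frobenius norm of a real matrix. -/
def frobNorm {m n : Type*} [Fintype m] [Fintype n] (A : Matrix m n ℝ) : ℝ :=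
  Real.sqrt (∑ i, ∑ j, (A i j) ^ 2)

/-- Entrywise maximum norm ‖·‖_∞ of a real matrix. -/
def maxNorm {m n : Type*} [Fintype m] [Fintype n] (A : Matrix m n ℝ) : ℝ :=
  ⨆ i, ⨆ j, |A i j|

/-- Two-to-infinity norm ‖·‖_{2,∞}: maximum Euclidean norm of a row. -/
def twoInfNorm {m n : Type*} [Fintype m] [Fintype n] (A : Matrix m n ℝ) : ℝ :=
  ⨆ i, vecNorm (fun j => A i j)


/-!
Let `F̃⊥` collect the eigenvectors of `Ã = A + W` beyond the first `r`. From `Fᵀ A = Λ₁ Fᵀ` and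
`Ã F̃⊥ = F̃⊥ Λ̃₂`, the matrix `X = Fᵀ F̃⊥` solves the Sylvester equation
`Λ₁ X - X Λ̃₂ = -Fᵀ W F̃⊥`. By Weyl's inequality `λ̃_{r+1} ≤ λ_{r+1} + ‖W‖₂`, every gap
`λ_i - λ̃_j` (`i ≤ r < j`) is at least `δ - ‖W‖₂`, so entrywise
`(δ - ‖W‖₂) ‖X‖_F ≤ ‖Fᵀ W F̃⊥‖_F ≤ ‖W F‖_F`.

On the other side `‖H‖_F² + ‖X‖_F² = ‖Fᵀ Q̃‖_F² = r`, and the singular values `σ_i` of the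
contraction `H` lie in `[0, 1]`, so `‖G - H‖_F² = ∑ (1 - σ_i)² ≤ ∑ (1 - σ_i²) = ‖X‖_F²`.
-/

section
variable {n : Type*} [Fintype n]

lemma vecNorm_eq_norm (v : n → ℝ) : vecNorm v = ‖(WithLp.toLp 2 v : EuclideanSpace ℝ n)‖ := by
  simp [vecNorm, EuclideanSpace.norm_eq]

lemma dotProduct_self_eq_sum_sq (x : n → ℝ) : x ⬝ᵥ x = ∑ j, x j ^ 2 := by
  simp [dotProduct, sq]

variable [DecidableEq n]

lemma specNorm_eq_norm_toEuclideanCLM (A : Matrix n n ℝ) :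
    specNorm A = ‖toEuclideanCLM (𝕜 := ℝ) A‖ := by
  rw [← ContinuousLinearMap.sSup_unitClosedBall_eq_norm, specNorm]
  congr 1
  ext c
  simp only [Set.mem_ofPred_eq, Set.mem_image, Metric.mem_closedBall, dist_zero_right,
    vecNorm_eq_norm]
  constructor
  · rintro ⟨x, hx, rfl⟩
    exact ⟨WithLp.toLp 2 x, hx, rfl⟩
  · rintro ⟨x, hx, rfl⟩
    exact ⟨WithLp.ofLp x, hx, rfl⟩

lemma dotProduct_mulVec_le_specNorm_mul (A : Matrix n n ℝ) (x : n → ℝ) :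
    x ⬝ᵥ A *ᵥ x ≤ specNorm A * (x ⬝ᵥ x) := by
  set v : EuclideanSpace ℝ n := WithLp.toLp 2 x
  set T := toEuclideanCLM (𝕜 := ℝ) A
  have hv : x ⬝ᵥ x = ‖v‖ ^ 2 := by
    rw [← real_inner_self_eq_norm_sq, EuclideanSpace.inner_toLp_toLp]
    simp
  rw [← inner_toEuclideanCLM A v v, hv, specNorm_eq_norm_toEuclideanCLM]
  calc inner ℝ v (T v) ≤ ‖v‖ * ‖T v‖ := real_inner_le_norm _ _
    _ ≤ ‖v‖ * (‖T‖ * ‖v‖) := by gcongr; exact T.le_opNorm v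
    _ = ‖T‖ * ‖v‖ ^ 2 := by ring

lemma dotProduct_mul_diagonal_mul_transpose_mulVec (P : Matrix n n ℝ) (μ x : n → ℝ) :
    x ⬝ᵥ (P * diagonal μ * Pᵀ) *ᵥ x = ∑ j, μ j * (Pᵀ *ᵥ x) j ^ 2 := by
  rw [← mulVec_mulVec, ← mulVec_mulVec, dotProduct_mulVec, ← mulVec_transpose]
  simp only [dotProduct, mulVec_diagonal]
  exact Finset.sum_congr rfl fun j _ => by ring

lemma dotProduct_transpose_mulVec_self {P : Matrix n n ℝ} (hP : P * Pᵀ = 1) (x : n → ℝ) :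
    (Pᵀ *ᵥ x) ⬝ᵥ (Pᵀ *ᵥ x) = x ⬝ᵥ x := by
  rw [dotProduct_mulVec, ← mulVec_transpose, transpose_transpose, mulVec_mulVec, hP,
    one_mulVec]

lemma dotProduct_mul_diagonal_mul_transpose_mulVec_le {P : Matrix n n ℝ} (hP : P * Pᵀ = 1)
    {μ x : n → ℝ} {t : ℝ} (hμ : ∀ j, (Pᵀ *ᵥ x) j ≠ 0 → μ j ≤ t) :
    x ⬝ᵥ (P * diagonal μ * Pᵀ) *ᵥ x ≤ t * (x ⬝ᵥ x) := by
  rw [dotProduct_mul_diagonal_mul_transpose_mulVec, ← dotProduct_transpose_mulVec_self hP,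
    dotProduct_self_eq_sum_sq, Finset.mul_sum]
  refine Finset.sum_le_sum fun j _ => ?_
  by_cases hj : (Pᵀ *ᵥ x) j = 0
  · simp [hj]
  · exact mul_le_mul_of_nonneg_right (hμ j hj) (sq_nonneg _)

lemma le_dotProduct_mul_diagonal_mul_transpose_mulVec {P : Matrix n n ℝ} (hP : P * Pᵀ = 1)
    {μ x : n → ℝ} {t : ℝ} (hμ : ∀ j, (Pᵀ *ᵥ x) j ≠ 0 → t ≤ μ j) :
    t * (x ⬝ᵥ x) ≤ x ⬝ᵥ (P * diagonal μ * Pᵀ) *ᵥ x := by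
  have h := dotProduct_mul_diagonal_mul_transpose_mulVec_le hP (μ := fun j => -μ j) (t := -t)
    fun j hj => neg_le_neg (hμ j hj)
  simp only [← diagonal_neg, Matrix.mul_neg, Matrix.neg_mul, neg_mulVec, dotProduct_neg] at h
  linarith

/-- Dimension count: these are `card n - 1` linear conditions on `x : n → ℝ`. -/
lemma exists_ne_zero_transpose_mulVec_eq_zero [LinearOrder n] (Q Qt : Matrix n n ℝ) (i : n) :
    ∃ x ≠ 0, (∀ j < i, (Qᵀ *ᵥ x) j = 0) ∧ ∀ j, i < j → (Qtᵀ *ᵥ x) j = 0 := by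
  let M : Matrix {j // j ≠ i} n ℝ := fun j => if (j : n) < i then Qᵀ j else Qtᵀ j
  have hdim : Module.finrank ℝ ({j // j ≠ i} → ℝ) < Module.finrank ℝ (n → ℝ) := by
    have : 0 < Fintype.card n := Fintype.card_pos_iff.mpr ⟨i⟩
    simp [Fintype.card_subtype_compl]
    omega
  obtain ⟨x, hx, hx0⟩ := Submodule.exists_mem_ne_zero_of_ne_bot
    (LinearMap.ker_ne_bot_of_finrank_lt (f := M.mulVecLin) hdim)
  have hMx : ∀ j : {j // j ≠ i}, (M *ᵥ x) j = 0 := fun j => congrFun hx j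
  refine ⟨x, hx0, fun j hj => ?_, fun j hj => ?_⟩
  · simpa [M, mulVec, hj] using hMx ⟨j, hj.ne⟩
  · simpa [M, mulVec, hj.not_gt] using hMx ⟨j, hj.ne'⟩

theorem eigenvalue_le_eigenvalue_add_specNorm [LinearOrder n] {A W Q Qt : Matrix n n ℝ}
    {lam lamt : n → ℝ} (hQ : Q * Qᵀ = 1) (hQt : Qt * Qtᵀ = 1) (hlam : Antitone lam)
    (hlamt : Antitone lamt) (hA : A = Q * diagonal lam * Qᵀ)
    (hAW : A + W = Qt * diagonal lamt * Qtᵀ) (i : n) :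
    lamt i ≤ lam i + specNorm W := by
  obtain ⟨x, hx0, hQx, hQtx⟩ := exists_ne_zero_transpose_mulVec_eq_zero Q Qt i
  have hx : 0 < x ⬝ᵥ x := by
    rw [dotProduct_self_eq_sum_sq]
    obtain ⟨j, hj⟩ := Function.ne_iff.mp hx0
    exact Finset.sum_pos' (fun j _ => sq_nonneg _) ⟨j, Finset.mem_univ _, sq_pos_of_ne_zero hj⟩
  have hlow : lamt i * (x ⬝ᵥ x) ≤ x ⬝ᵥ (A + W) *ᵥ x := by
    rw [hAW]
    exact le_dotProduct_mul_diagonal_mul_transpose_mulVec hQt fun j hj =>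
      hlamt (not_lt.mp fun hij => hj (hQtx j hij))
  have hup : x ⬝ᵥ A *ᵥ x ≤ lam i * (x ⬝ᵥ x) := by
    rw [hA]
    exact dotProduct_mul_diagonal_mul_transpose_mulVec_le hQ fun j hj =>
      hlam (not_lt.mp fun hji => hj (hQx j hji))
  have hW := dotProduct_mulVec_le_specNorm_mul W x
  rw [add_mulVec, dotProduct_add] at hlow
  nlinarith
end

lemma mul_submatrix_id {l m n ι : Type*} [Fintype m] (M : Matrix l m ℝ) (N : Matrix m n ℝ)
    (e : ι → n) : M * N.submatrix id e = (M * N).submatrix id e := by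
  ext
  simp [mul_apply]

lemma transpose_submatrix_mul_submatrix {m n ι : Type*} [Fintype m] [DecidableEq n]
    [DecidableEq ι] {Q : Matrix m n ℝ} (hQ : Qᵀ * Q = 1) {e : ι → n}
    (he : Function.Injective e) : (Q.submatrix id e)ᵀ * Q.submatrix id e = 1 := by
  rw [transpose_submatrix, ← submatrix_mul _ _ _ _ _ Function.bijective_id, hQ, submatrix_one _ he]

lemma mul_submatrix_eq_submatrix_mul_diagonal {n ι : Type*} [Fintype n] [DecidableEq n]
    [Fintype ι] [DecidableEq ι] {P : Matrix n n ℝ} (hP : Pᵀ * P = 1) (μ : n → ℝ) (e : ι → n) :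
    P * diagonal μ * Pᵀ * P.submatrix id e = P.submatrix id e * diagonal (μ ∘ e) := by
  rw [Matrix.mul_assoc, mul_submatrix_id, hP]
  ext i j
  simp [mul_apply, diagonal, one_apply]

lemma isSymm_mul_diagonal_mul_transpose {m n : Type*} [Fintype n] [DecidableEq n]
    (P : Matrix m n ℝ) (μ : n → ℝ) : (P * diagonal μ * Pᵀ).IsSymm := by
  simp [IsSymm, transpose_mul, Matrix.mul_assoc]

section
variable {l m n : Type*} [Fintype m] [Fintype n]

def frobSq (M : Matrix m n ℝ) : ℝ := ∑ i, ∑ j, M i j ^ 2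

lemma frobNorm_eq_sqrt_frobSq (M : Matrix m n ℝ) : frobNorm M = √(frobSq M) := rfl

lemma frobSq_nonneg (M : Matrix m n ℝ) : 0 ≤ frobSq M := by
  unfold frobSq
  positivity

lemma frobSq_eq_trace (M : Matrix m n ℝ) : frobSq M = trace (Mᵀ * M) := by
  simp only [frobSq, trace, mul_apply, diag, transpose_apply, sq]
  exact Finset.sum_comm

lemma frobSq_transpose (M : Matrix m n ℝ) : frobSq Mᵀ = frobSq M :=
  Finset.sum_comm

lemma frobSq_diagonal [DecidableEq n] (σ : n → ℝ) : frobSq (diagonal σ) = ∑ i, σ i ^ 2 := by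
  refine Finset.sum_congr rfl fun i _ => ?_
  rw [Finset.sum_eq_single i (fun j _ hj => by simp [diagonal_apply_ne _ hj.symm]) (by simp)]
  simp

lemma frobSq_mul_left_of_transpose_mul_eq_one [Fintype l] [DecidableEq m] {A : Matrix l m ℝ}
    (hA : Aᵀ * A = 1) (M : Matrix m n ℝ) : frobSq (A * M) = frobSq M := by
  rw [frobSq_eq_trace, frobSq_eq_trace, transpose_mul, Matrix.mul_assoc, ← Matrix.mul_assoc Aᵀ,
    hA, Matrix.one_mul]

lemma frobSq_mul_right_of_mul_transpose_eq_one [Fintype l] [DecidableEq n] {B : Matrix n l ℝ}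
    (hB : B * Bᵀ = 1) (M : Matrix m n ℝ) : frobSq (M * B) = frobSq M := by
  rw [← frobSq_transpose, transpose_mul,
    frobSq_mul_left_of_transpose_mul_eq_one (by simpa using hB), frobSq_transpose]

lemma sq_mul_frobSq_le_of_diagonal_mul_add_eq [DecidableEq m] [DecidableEq n]
    {X M : Matrix m n ℝ} {μ : m → ℝ} {ν : n → ℝ} {g : ℝ} (hg : 0 ≤ g)
    (hgap : ∀ i j, g ≤ μ i - ν j) (hX : diagonal μ * X + M = X * diagonal ν) :
    g ^ 2 * frobSq X ≤ frobSq M := by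
  simp only [frobSq, Finset.mul_sum]
  refine Finset.sum_le_sum fun i _ => Finset.sum_le_sum fun j _ => ?_
  have hij : (μ i - ν j) * X i j = -M i j := by
    have := congrFun (congrFun hX i) j
    simp only [Matrix.add_apply, diagonal_mul, mul_diagonal] at this
    linarith
  have hg2 : g ^ 2 ≤ (μ i - ν j) ^ 2 := pow_le_pow_left₀ hg (hgap i j) 2
  calc g ^ 2 * X i j ^ 2 ≤ (μ i - ν j) ^ 2 * X i j ^ 2 := by gcongr
    _ = M i j ^ 2 := by rw [← mul_pow, hij, neg_sq]

lemma frobNorm_le_div_of_sq_mul_frobSq_le {m' n' : Type*} [Fintype m'] [Fintype n']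
    {M : Matrix m n ℝ} {M' : Matrix m' n' ℝ} {g : ℝ} (hg : 0 < g)
    (h : g ^ 2 * frobSq M ≤ frobSq M') : frobNorm M ≤ frobNorm M' / g := by
  rw [le_div_iff₀ hg, frobNorm_eq_sqrt_frobSq, frobNorm_eq_sqrt_frobSq, ← Real.sqrt_sq hg.le,
    ← Real.sqrt_mul (frobSq_nonneg M)]
  exact Real.sqrt_le_sqrt (by linarith)
end

lemma frobSq_submatrix_of_transpose_mul_eq_one {m n ι : Type*} [Fintype m] [DecidableEq n]
    [Fintype ι] [DecidableEq ι] {Q : Matrix m n ℝ} (hQ : Qᵀ * Q = 1) {e : ι → n}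
    (he : Function.Injective e) : frobSq (Q.submatrix id e) = Fintype.card ι := by
  rw [frobSq_eq_trace, transpose_submatrix_mul_submatrix hQ he, trace_one]

section
variable {n : Type*} [Fintype n] [DecidableEq n]

lemma sq_le_one_of_transpose_mul_self_add_eq_one {l : Type*} [Fintype l] {H : Matrix n n ℝ}
    {Y : Matrix l n ℝ} (hHY : Hᵀ * H + Yᵀ * Y = 1) {A' B' : Matrix n n ℝ} {σ : n → ℝ}
    (hA' : A'ᵀ * A' = 1) (hB' : B'ᵀ * B' = 1) (hH : H = A' * diagonal σ * B'ᵀ) (i : n) :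
    σ i ^ 2 ≤ 1 := by
  have hHB : H * B' = A' * diagonal σ := by
    rw [hH, Matrix.mul_assoc, Matrix.mul_assoc, hB', Matrix.mul_one]
  have hsum : diagonal σ * diagonal σ + (Y * B')ᵀ * (Y * B') = 1 := by
    calc _ = (H * B')ᵀ * (H * B') + (Y * B')ᵀ * (Y * B') := by
          simp only [hHB, transpose_mul, diagonal_transpose, Matrix.mul_assoc]
          rw [← Matrix.mul_assoc A'ᵀ, hA', Matrix.one_mul]
      _ = B'ᵀ * (Hᵀ * H + Yᵀ * Y) * B' := by
          simp only [transpose_mul, Matrix.mul_add, Matrix.add_mul, Matrix.mul_assoc]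
      _ = 1 := by rw [hHY, Matrix.mul_one, hB']
  have hii := congrFun (congrFun hsum i) i
  simp only [Matrix.add_apply, diagonal_mul_diagonal, diagonal_apply_eq, one_apply_eq] at hii
  have hnonneg : 0 ≤ ((Y * B')ᵀ * (Y * B')) i i := by
    simp only [mul_apply, transpose_apply]
    exact Finset.sum_nonneg fun j _ => mul_self_nonneg _
  nlinarith

lemma frobSq_mul_transpose_sub_le {H A' B' : Matrix n n ℝ} {σ : n → ℝ} (hA' : A'ᵀ * A' = 1)
    (hB' : B'ᵀ * B' = 1) (hσ0 : ∀ i, 0 ≤ σ i) (hσ1 : ∀ i, σ i ^ 2 ≤ 1)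
    (hH : H = A' * diagonal σ * B'ᵀ) :
    frobSq (A' * B'ᵀ - H) ≤ Fintype.card n - frobSq H := by
  have hsvd : ∀ D : Matrix n n ℝ, frobSq (A' * D * B'ᵀ) = frobSq D := fun D => by
    rw [Matrix.mul_assoc, frobSq_mul_left_of_transpose_mul_eq_one hA',
      frobSq_mul_right_of_mul_transpose_eq_one (by rwa [transpose_transpose])]
  have hGH : A' * B'ᵀ - H = A' * diagonal (fun i => 1 - σ i) * B'ᵀ := by
    have hdiag : diagonal (fun i => 1 - σ i) = 1 - diagonal σ := by
      rw [← diagonal_one, diagonal_sub]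
    rw [hH, hdiag, Matrix.mul_sub, Matrix.sub_mul, Matrix.mul_one]
  rw [hGH, hsvd, hH, hsvd, frobSq_diagonal, frobSq_diagonal, Fintype.card_eq_sum_ones,
    Nat.cast_sum, Nat.cast_one, ← Finset.sum_sub_distrib]
  refine Finset.sum_le_sum fun i _ => ?_
  -- `(1 - σ)² ≤ 1 - σ²` because `σ ∈ [0, 1]`
  nlinarith [hσ0 i, hσ1 i]
end

section
variable {r k : ℕ}

lemma frobSq_eq_add_submatrix_castAdd_natAdd {m : Type*} [Fintype m]
    (M : Matrix m (Fin (r + k)) ℝ) :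
    frobSq M
      = frobSq (M.submatrix id (Fin.castAdd k)) + frobSq (M.submatrix id (Fin.natAdd r)) := by
  simp only [frobSq, ← Finset.sum_add_distrib, Fin.sum_univ_add, submatrix_apply, id]

lemma mul_eq_add_submatrix_castAdd_natAdd {m n : Type*} (M : Matrix m (Fin (r + k)) ℝ)
    (M' : Matrix (Fin (r + k)) n ℝ) :
    M * M' = M.submatrix id (Fin.castAdd k) * M'.submatrix (Fin.castAdd k) id
      + M.submatrix id (Fin.natAdd r) * M'.submatrix (Fin.natAdd r) id := by
  ext i j
  simp only [mul_apply, Matrix.add_apply, Fin.sum_univ_add, submatrix_apply, id]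

lemma transpose_mul_self_add_transpose_mul_self_eq_one {p : Type*} [Fintype p] [DecidableEq p]
    {Q : Matrix (Fin (r + k)) (Fin (r + k)) ℝ} (hQ : Q * Qᵀ = 1)
    {M : Matrix (Fin (r + k)) p ℝ} (hM : Mᵀ * M = 1) :
    ((Q.submatrix id (Fin.castAdd k))ᵀ * M)ᵀ * ((Q.submatrix id (Fin.castAdd k))ᵀ * M)
      + ((Q.submatrix id (Fin.natAdd r))ᵀ * M)ᵀ * ((Q.submatrix id (Fin.natAdd r))ᵀ * M) = 1 := by
  calc _ = Mᵀ * (Q.submatrix id (Fin.castAdd k) * Qᵀ.submatrix (Fin.castAdd k) id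
        + Q.submatrix id (Fin.natAdd r) * Qᵀ.submatrix (Fin.natAdd r) id) * M := by
        simp only [transpose_mul, transpose_transpose, transpose_submatrix, Matrix.mul_add,
          Matrix.add_mul, Matrix.mul_assoc]
    _ = 1 := by rw [← mul_eq_add_submatrix_castAdd_natAdd, hQ, Matrix.mul_one, hM]

theorem sq_mul_frobSq_transpose_mul_submatrix_natAdd_le
    {A W Q Qt : Matrix (Fin (r + k)) (Fin (r + k)) ℝ} {lam lamt : Fin (r + k) → ℝ}
    (hQ : Qᵀ * Q = 1) (hQt : Qtᵀ * Qt = 1) (hA : A = Q * diagonal lam * Qᵀ)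
    (hAW : A + W = Qt * diagonal lamt * Qtᵀ) {g : ℝ} (hg : 0 ≤ g)
    (hgap : ∀ i j, g ≤ lam (Fin.castAdd k i) - lamt (Fin.natAdd r j)) :
    g ^ 2 * frobSq ((Q.submatrix id (Fin.castAdd k))ᵀ * Qt.submatrix id (Fin.natAdd r))
      ≤ frobSq (W * Q.submatrix id (Fin.castAdd k)) := by
  set F := Q.submatrix id (Fin.castAdd k)
  have hAsymm : Aᵀ = A := hA ▸ (isSymm_mul_diagonal_mul_transpose Q lam).eq
  have hWsymm : Wᵀ = W := by
    have h := congrArg transpose hAW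
    rwa [(isSymm_mul_diagonal_mul_transpose Qt lamt).eq, transpose_add, hAsymm, ← hAW,
      add_right_inj] at h
  have hFA : Fᵀ * A = diagonal (lam ∘ Fin.castAdd k) * Fᵀ := by
    have hAF : A * F = F * diagonal (lam ∘ Fin.castAdd k) := by
      rw [hA]
      exact mul_submatrix_eq_submatrix_mul_diagonal hQ lam _
    have h := congrArg transpose hAF
    rwa [transpose_mul, transpose_mul, hAsymm, diagonal_transpose] at h
  have hsylvester : diagonal (lam ∘ Fin.castAdd k) * (Fᵀ * Qt.submatrix id (Fin.natAdd r))
      + Fᵀ * W * Qt.submatrix id (Fin.natAdd r)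
      = Fᵀ * Qt.submatrix id (Fin.natAdd r) * diagonal (lamt ∘ Fin.natAdd r) := by
    calc _ = Fᵀ * ((A + W) * Qt.submatrix id (Fin.natAdd r)) := by
          simp only [Matrix.mul_add, Matrix.add_mul, ← Matrix.mul_assoc, hFA]
      _ = _ := by
          rw [hAW, mul_submatrix_eq_submatrix_mul_diagonal hQt, Matrix.mul_assoc]
  refine (sq_mul_frobSq_le_of_diagonal_mul_add_eq hg hgap hsylvester).trans ?_
  calc frobSq (Fᵀ * W * Qt.submatrix id (Fin.natAdd r))
      ≤ frobSq (Fᵀ * W * Qt) := by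
        rw [frobSq_eq_add_submatrix_castAdd_natAdd (Fᵀ * W * Qt), mul_submatrix_id]
        exact le_add_of_nonneg_left (frobSq_nonneg _)
    _ = frobSq (W * F) := by
        rw [frobSq_mul_right_of_mul_transpose_eq_one (mul_eq_one_comm.mp hQt), ← frobSq_transpose,
          transpose_mul, transpose_transpose, hWsymm]

theorem frobSq_polar_sub_le
    {Q Qt : Matrix (Fin (r + k)) (Fin (r + k)) ℝ} (hQ : Qᵀ * Q = 1) (hQt : Qtᵀ * Qt = 1)
    {A' B' : Matrix (Fin r) (Fin r) ℝ} {σ : Fin r → ℝ} (hA' : A'ᵀ * A' = 1) (hB' : B'ᵀ * B' = 1)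
    (hσ : ∀ i, 0 ≤ σ i)
    (hH : (Q.submatrix id (Fin.castAdd k))ᵀ * Qt.submatrix id (Fin.castAdd k)
      = A' * diagonal σ * B'ᵀ) :
    frobSq (A' * B'ᵀ - (Q.submatrix id (Fin.castAdd k))ᵀ * Qt.submatrix id (Fin.castAdd k))
      ≤ frobSq ((Q.submatrix id (Fin.castAdd k))ᵀ * Qt.submatrix id (Fin.natAdd r)) := by
  set F := Q.submatrix id (Fin.castAdd k)
  have hσ1 := sq_le_one_of_transpose_mul_self_add_eq_one
    (transpose_mul_self_add_transpose_mul_self_eq_one (mul_eq_one_comm.mp hQ)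
      (transpose_submatrix_mul_submatrix hQt (Fin.castAdd_injective r k))) hA' hB' hH
  have hsplit : frobSq (Fᵀ * Qt.submatrix id (Fin.castAdd k))
      + frobSq (Fᵀ * Qt.submatrix id (Fin.natAdd r)) = r := by
    rw [mul_submatrix_id, mul_submatrix_id, ← frobSq_eq_add_submatrix_castAdd_natAdd,
      frobSq_mul_right_of_mul_transpose_eq_one (mul_eq_one_comm.mp hQt), frobSq_transpose,
      frobSq_submatrix_of_transpose_mul_eq_one hQ (Fin.castAdd_injective r k), Fintype.card_fin]
  have hpolar := frobSq_mul_transpose_sub_le hA' hB' hσ hσ1 hH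
  rw [Fintype.card_fin] at hpolar
  linarith
end

/-- `‖G − H‖_F ≤ ‖WF‖_F/(δ − ‖W‖₂)` where `H = FᵀF̃` and `G` is its orthogonal polar factor. -/
theorem stmt11 {N r : ℕ} (hrN : r < N)
    (Am W : Matrix (Fin N) (Fin N) ℝ)
    -- eigendecompositions of A and Ã = A + W with decreasing eigenvalues
    (Q Qt : Matrix (Fin N) (Fin N) ℝ) (lam lamt : Fin N → ℝ)
    (hQ : Qᵀ * Q = 1) (hQt : Qtᵀ * Qt = 1)
    (hlam : ∀ i j : Fin N, i ≤ j → lam j ≤ lam i)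
    (hlamt : ∀ i j : Fin N, i ≤ j → lamt j ≤ lamt i)
    (hAeig : Am = Q * Matrix.diagonal lam * Qᵀ)
    (hAteig : Am + W = Qt * Matrix.diagonal lamt * Qtᵀ)
    -- F, F̃: orthonormal eigenvectors for the r largest eigenvalues
    (F Ft : Matrix (Fin N) (Fin r) ℝ)
    (hF : F = Q.submatrix id (Fin.castLE hrN.le))
    (hFt : Ft = Qt.submatrix id (Fin.castLE hrN.le))
    -- SVD of H = FᵀF̃ and the rotation G
    (A' B' : Matrix (Fin r) (Fin r) ℝ) (σtil : Fin r → ℝ)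
    (hA' : A'ᵀ * A' = 1) (hB' : B'ᵀ * B' = 1) (hσtil : ∀ i, 0 ≤ σtil i)
    (hH : Fᵀ * Ft = A' * Matrix.diagonal σtil * B'ᵀ)
    (G : Matrix (Fin r) (Fin r) ℝ) (hG : G = A' * B'ᵀ)
    -- eigengap condition
    (δ : ℝ) (hδ : δ = lam ⟨r - 1, by omega⟩ - lam ⟨r, hrN⟩)
    (hW : specNorm W < δ) :
    frobNorm (G - Fᵀ * Ft) ≤ frobNorm (W * F) / (δ - specNorm W) := by
  obtain ⟨k, rfl⟩ : ∃ k, N = r + k := ⟨N - r, by omega⟩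
  -- from here on `Fin.castLE hrN.le` is definitionally `Fin.castAdd k`
  subst hF hFt hG
  have hg : 0 < δ - specNorm W := sub_pos.mpr hW
  have hweyl := eigenvalue_le_eigenvalue_add_specNorm (mul_eq_one_comm.mp hQ)
    (mul_eq_one_comm.mp hQt) hlam hlamt hAeig hAteig ⟨r, hrN⟩
  have hgap : ∀ i j, δ - specNorm W ≤ lam (Fin.castAdd k i) - lamt (Fin.natAdd r j) := by
    intro i j
    have hi := hlam (Fin.castAdd k i) ⟨r - 1, by omega⟩ (by simp [Fin.le_def]; omega)
    have hj := hlamt ⟨r, hrN⟩ (Fin.natAdd r j) (by simp [Fin.le_def])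
    linarith
  have hsin := sq_mul_frobSq_transpose_mul_submatrix_natAdd_le hQ hQt hAeig hAteig hg.le hgap
  have hpolar := frobSq_polar_sub_le hQ hQt hA' hB' hσtil hH
  exact frobNorm_le_div_of_sq_mul_frobSq_le hg
    ((mul_le_mul_of_nonneg_left hpolar (sq_nonneg _)).trans hsin)
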